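/- arXiv:1509.06231 — 2 statements merged into one kernel-verified Lean document; each statement's English description precedes it below -/
import Mathlib

section
/- Let F ∈ ℂ[X] be a polynomial of degree n ≥ 2, let m ∈ ℂ and r > 0, and set N := ⌈log₂(1 + log₂ n)⌉ + 5, ρ₁ := 2√2/3, ρ₂ := 4/3. Let k be an integer with 0 ≤ k ≤ n, and suppose that the open disk D(m, ρ₁·r) contains exactly k roots of F counted with multiplicity and that F has no root z with ρ₁·r ≤ |z − m| < ρ₂·r. Let G := (F_Δ)^{[N]} be the N-th Graeffe iterate of F_Δ(X) := F(m + r·X). Then T_k(0, 1, 3/2, G) holds, i.e. the k-th coefficient g_k of G satisfies |g_k| > (3/2)·∑_{0 ≤ i ≤ n, i ≠ k} |g_i|. -/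
open Polynomial Finset

/-- The even part `F_e = ∑_j a_{2j} X^j` of a polynomial `F = ∑ a_i X^i`. -/
noncomputable def evenPart (F : Polynomial ℂ) : Polynomial ℂ :=
  ∑ j ∈ Finset.range (F.natDegree + 1), Polynomial.C (F.coeff (2 * j)) * Polynomial.X ^ j

/-- The odd part `F_o = ∑_j a_{2j+1} X^j` of a polynomial `F = ∑ a_i X^i`,
so that `F(X) = F_e(X²) + X·F_o(X²)`. -/
noncomputable def oddPart (F : Polynomial ℂ) : Polynomial ℂ :=
  ∑ j ∈ Finset.range (F.natDegree + 1), Polynomial.C (F.coeff (2 * j + 1)) * Polynomial.X ^ j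

/-- The first Graeffe iterate `F^{[1]} := (−1)^n·(F_e² − X·F_o²)` where `n = deg F`. -/
noncomputable def graeffe (F : Polynomial ℂ) : Polynomial ℂ :=
  (-1) ^ F.natDegree * (evenPart F ^ 2 - Polynomial.X * oddPart F ^ 2)

open Classical in
/-- The number of roots of `F` (counted with multiplicity) in the open disk `D(m, r)`. -/
noncomputable def rootsInDisk (F : Polynomial ℂ) (m : ℂ) (r : ℝ) : ℕ :=
  Multiset.card (F.roots.filter fun z => ‖z - m‖ < r)

/-!
After the substitution `X ↦ m + r X`, the roots of `F_Δ` split into `k` roots of modulus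
`< 2√2/3` and `n - k` roots of modulus `≥ 4/3`. Since `2^N = 32 j` with `2 n ≤ 2^j`, the `N`
Graeffe steps raise every root to the power `32 j`, pushing the small roots below `s = 2^{-j}` and
the large ones above `1/s`. Writing `G = c · ∏ (X - α) · ∏ (1 - X/β)`, the product is
majorized coefficientwise by `(X + s)^k (1 + s X)^(n-k)`, whose value at `1` is at most
`e^{ns} ≤ e^{1/2} < 5/3`.
Hence `G / c` is `X^k` plus a polynomial whose coefficients have absolute sum `< 2/3`, and this
makes the `k`-th coefficient dominate the others by the factor `3/2`.
-/

lemma coeff_sum_range_C_mul_X_pow {R : Type*} [Semiring R] (f : ℕ → R) (d i : ℕ) :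
    (∑ j ∈ range (d + 1), C (f j) * X ^ j).coeff i = if i ≤ d then f i else 0 := by
  simp only [finsetSum_coeff, coeff_C_mul_X_pow, sum_ite_eq, mem_range, Nat.lt_succ_iff]

lemma coeff_evenPart (F : ℂ[X]) (i : ℕ) : (evenPart F).coeff i = F.coeff (2 * i) := by
  rw [evenPart, coeff_sum_range_C_mul_X_pow]
  split_ifs with h
  · rfl
  · exact (coeff_eq_zero_of_natDegree_lt (by omega)).symm

lemma coeff_oddPart (F : ℂ[X]) (i : ℕ) : (oddPart F).coeff i = F.coeff (2 * i + 1) := by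
  rw [oddPart, coeff_sum_range_C_mul_X_pow]
  split_ifs with h
  · rfl
  · exact (coeff_eq_zero_of_natDegree_lt (by omega)).symm

lemma expand_evenPart_add_X_mul_expand_oddPart (F : ℂ[X]) :
    expand ℂ 2 (evenPart F) + X * expand ℂ 2 (oddPart F) = F := by
  have odd_not_dvd (j : ℕ) : ¬2 ∣ 2 * j + 1 := by omega
  ext i
  rcases Nat.even_or_odd' i with ⟨j, rfl | rfl⟩
  · have hodd : (X * expand ℂ 2 (oddPart F)).coeff (2 * j) = 0 := by
      rcases j with _ | j
      · exact coeff_X_mul_zero _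
      · rw [show 2 * (j + 1) = 2 * j + 1 + 1 by ring, coeff_X_mul, coeff_expand two_pos,
          if_neg (odd_not_dvd j)]
    rw [coeff_add, hodd, coeff_expand_mul' two_pos, coeff_evenPart, add_zero]
  · rw [coeff_add, coeff_X_mul, coeff_expand two_pos, if_neg (odd_not_dvd j),
      coeff_expand_mul' two_pos, coeff_oddPart, zero_add]

lemma expand_graeffe (F : ℂ[X]) :
    expand ℂ 2 (graeffe F) = (-1) ^ F.natDegree * (F * F.comp (-X)) := by
  have expand_comp_neg_X (Q : ℂ[X]) : (expand ℂ 2 Q).comp (-X) = expand ℂ 2 Q := by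
    rw [expand_eq_comp_X_pow, comp_assoc, X_pow_comp, neg_sq]
  have hF := expand_evenPart_add_X_mul_expand_oddPart F
  have hF' : F.comp (-X) = expand ℂ 2 (evenPart F) - X * expand ℂ 2 (oddPart F) := by
    conv_lhs => rw [← hF]
    rw [add_comp, mul_comp, X_comp, expand_comp_neg_X, expand_comp_neg_X]
    ring
  simp only [graeffe, map_mul, map_pow, map_neg, map_one, map_sub, expand_X, hF']
  linear_combination
    (-1) ^ F.natDegree * (expand ℂ 2 (evenPart F) - X * expand ℂ 2 (oddPart F)) * hF

lemma graeffe_zero : graeffe 0 = 0 := by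
  simp [graeffe, evenPart, oddPart]

lemma graeffe_mul (P Q : ℂ[X]) : graeffe (P * Q) = graeffe P * graeffe Q := by
  rcases eq_or_ne P 0 with rfl | hP
  · simp [graeffe_zero]
  rcases eq_or_ne Q 0 with rfl | hQ
  · simp [graeffe_zero]
  apply expand_injective two_pos
  rw [map_mul, expand_graeffe, expand_graeffe, expand_graeffe, natDegree_mul hP hQ, mul_comp,
    pow_add]
  ring

lemma graeffe_C (c : ℂ) : graeffe (C c) = C (c ^ 2) := by
  apply expand_injective two_pos
  simp [expand_graeffe, sq]

lemma graeffe_X_sub_C (b : ℂ) : graeffe (X - C b) = X - C (b ^ 2) := by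
  apply expand_injective two_pos
  simp only [expand_graeffe, natDegree_X_sub_C, sub_comp, X_comp, C_comp, map_sub, expand_X,
    expand_C, map_pow]
  ring

lemma graeffe_C_mul_prod_X_sub_C (c : ℂ) (s : Multiset ℂ) :
    graeffe (C c * (s.map fun b => X - C b).prod) =
      C (c ^ 2) * ((s.map (· ^ 2)).map fun b => X - C b).prod := by
  induction s using Multiset.induction_on with
  | empty => simp [graeffe_C]
  | cons b s ih =>
    rw [Multiset.map_cons, Multiset.prod_cons, mul_left_comm, graeffe_mul, graeffe_X_sub_C, ih,
      Multiset.map_cons, Multiset.map_cons, Multiset.prod_cons, mul_left_comm]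

lemma graeffe_iterate_C_mul_prod_X_sub_C (N : ℕ) (c : ℂ) (s : Multiset ℂ) :
    graeffe^[N] (C c * (s.map fun b => X - C b).prod) =
      C (c ^ 2 ^ N) * ((s.map (· ^ 2 ^ N)).map fun b => X - C b).prod := by
  induction N generalizing c s with
  | zero => simp
  | succ N ih =>
    rw [Function.iterate_succ_apply, graeffe_C_mul_prod_X_sub_C, ih, pow_succ' 2 N]
    simp only [Multiset.map_map, Function.comp_def, ← pow_mul]

def IsMajorant (M : ℝ[X]) (P : ℂ[X]) : Prop :=
  ∀ i, ‖P.coeff i‖ ≤ M.coeff i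

namespace IsMajorant

variable {M M' : ℝ[X]} {P P' : ℂ[X]}

lemma coeff_nonneg (h : IsMajorant M P) (i : ℕ) : 0 ≤ M.coeff i :=
  (norm_nonneg _).trans (h i)

lemma add (h : IsMajorant M P) (h' : IsMajorant M' P') : IsMajorant (M + M') (P + P') :=
  fun i => by simpa only [coeff_add] using (norm_add_le _ _).trans (add_le_add (h i) (h' i))

lemma mul (h : IsMajorant M P) (h' : IsMajorant M' P') : IsMajorant (M * M') (P * P') := by
  intro i
  rw [coeff_mul, coeff_mul]
  refine (norm_sum_le _ _).trans (sum_le_sum fun x _ => ?_)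
  rw [norm_mul]
  exact mul_le_mul (h _) (h' _) (norm_nonneg _) (h.coeff_nonneg _)

lemma X_pow (k : ℕ) : IsMajorant (X ^ k) (X ^ k) := by
  intro i
  simp only [coeff_X_pow]
  split_ifs <;> simp

lemma sub_X_pow {k : ℕ} (h : IsMajorant M P) (hP : P.coeff k = 1) (hM : M.coeff k = 1) :
    IsMajorant (M - X ^ k) (P - X ^ k) := by
  intro i
  simp only [coeff_sub, coeff_X_pow]
  split_ifs with hi
  · subst hi
    simp [hP, hM]
  · simpa using h i

lemma mul_sub_X_pow {a b : ℝ[X]} {A B : ℂ[X]} {k : ℕ} (hA : IsMajorant a A)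
    (hB : IsMajorant b B) (hAk : A.coeff k = 1) (hak : a.coeff k = 1) (hB0 : B.coeff 0 = 1)
    (hb0 : b.coeff 0 = 1) : IsMajorant (a * b - X ^ k) (A * B - X ^ k) := by
  have key := ((hA.sub_X_pow hAk hak).mul hB).add
    ((X_pow k).mul (hB.sub_X_pow hB0 hb0))
  simp only [pow_zero] at key
  rwa [show (a - X ^ k) * b + X ^ k * (b - 1) = a * b - X ^ k by ring,
    show (A - X ^ k) * B + X ^ k * (B - 1) = A * B - X ^ k by ring] at key

lemma multiset_prod {ι : Type*} (l : Multiset ι) (f : ι → ℂ[X])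
    (h : ∀ i ∈ l, IsMajorant M (f i)) :
    IsMajorant (M ^ Multiset.card l) (l.map f).prod := by
  induction l using Multiset.induction_on with
  | empty => exact X_pow 0
  | cons a l ih =>
    rw [Multiset.map_cons, Multiset.prod_cons, Multiset.card_cons, pow_succ']
    exact (h a (Multiset.mem_cons_self a l)).mul (ih fun i hi => h i (Multiset.mem_cons_of_mem hi))

lemma sum_range_le_eval_one (h : IsMajorant M P) (n : ℕ) :
    ∑ i ∈ range n, M.coeff i ≤ M.eval 1 := by
  rw [eval_eq_sum_range' (n := max n (M.natDegree + 1)) (by omega)]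
  simp only [one_pow, mul_one]
  exact sum_le_sum_of_subset_of_nonneg (range_subset_range.mpr (le_max_left _ _))
    fun i _ _ => h.coeff_nonneg i

end IsMajorant

lemma isMajorant_C_mul_X_add_C {a b : ℂ} {s t : ℝ} (ha : ‖a‖ ≤ s) (hb : ‖b‖ ≤ t) :
    IsMajorant (C s * X + C t) (C a * X + C b) := by
  rintro (_ | _ | i) <;> simp [coeff_C, coeff_X, ha, hb]

/-- The test `T_k(0, 1, K, Q)` of the paper, for `Q` of degree at most `n`. -/
def CoeffDominant (K : ℝ) (k n : ℕ) (Q : ℂ[X]) : Prop :=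
  K * ∑ i ∈ (range (n + 1)).erase k, ‖Q.coeff i‖ < ‖Q.coeff k‖

lemma CoeffDominant.C_mul {K : ℝ} {k n : ℕ} {Q : ℂ[X]} (h : CoeffDominant K k n Q) {c : ℂ}
    (hc : c ≠ 0) : CoeffDominant K k n (C c * Q) := by
  simp only [CoeffDominant, coeff_C_mul, norm_mul, ← mul_sum]
  nlinarith [mul_lt_mul_of_pos_left h (norm_pos_iff.mpr hc)]

lemma coeffDominant_of_isMajorant_sub_X_pow {K : ℝ} {k n : ℕ} {Q : ℂ[X]} {M : ℝ[X]}
    (hK : 1 ≤ K) (hk : k ≤ n) (hM : IsMajorant M (Q - X ^ k)) (hMK : K * M.eval 1 < 1) :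
    CoeffDominant K k n Q := by
  set e := ‖Q.coeff k - 1‖
  have hsplit : ∑ i ∈ range (n + 1), ‖(Q - X ^ k).coeff i‖ =
      e + ∑ i ∈ (range (n + 1)).erase k, ‖Q.coeff i‖ := by
    rw [← add_sum_erase _ _ (mem_range.mpr (Nat.lt_succ_of_le hk))]
    congr 1
    · simp [e]
    · exact sum_congr rfl fun i hi => by simp [coeff_X_pow, ne_of_mem_erase hi]
  have hle : ∑ i ∈ range (n + 1), ‖(Q - X ^ k).coeff i‖ ≤ M.eval 1 :=
    (sum_le_sum fun i _ => hM i).trans (hM.sum_range_le_eval_one _)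
  have hQk : 1 - e ≤ ‖Q.coeff k‖ := by
    have := norm_sub_norm_le (1 : ℂ) (Q.coeff k)
    rw [norm_one, norm_sub_rev] at this
    linarith
  have he : 0 ≤ e := norm_nonneg _
  unfold CoeffDominant
  nlinarith

lemma one_add_pow_lt_five_thirds {s : ℝ} {n : ℕ} (hs : 0 ≤ s) (hns : n * s ≤ 1 / 2) :
    (1 + s) ^ n < 5 / 3 := by
  have hexp_half : Real.exp (1 / 2) < 5 / 3 := by
    have hsq : Real.exp (1 / 2) * Real.exp (1 / 2) = Real.exp 1 := by
      rw [← Real.exp_add]; norm_num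
    nlinarith [Real.exp_pos (1 / 2), Real.exp_one_lt_d9]
  calc (1 + s) ^ n ≤ Real.exp s ^ n := by
        gcongr
        linarith [Real.add_one_le_exp s]
    _ = Real.exp (n * s) := (Real.exp_nat_mul s n).symm
    _ ≤ Real.exp (1 / 2) := Real.exp_le_exp.mpr hns
    _ < 5 / 3 := hexp_half

lemma X_sub_C_eq_C_mul (β : ℂ) (hβ : β ≠ 0) :
    X - C β = C (-β) * (C (-β⁻¹) * X + 1) := by
  rw [mul_add, ← mul_assoc, ← C_mul, neg_mul_neg, mul_inv_cancel₀ hβ, C_1, one_mul, mul_one,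
    map_neg, sub_eq_add_neg]

theorem coeffDominant_prod_X_sub_C {S T : Multiset ℂ} {s : ℝ} (hs : 0 ≤ s)
    (hS : ∀ α ∈ S, ‖α‖ ≤ s) (hT : ∀ β ∈ T, 1 ≤ s * ‖β‖)
    (hST : (Multiset.card S + Multiset.card T) * s ≤ 1 / 2) :
    CoeffDominant (3 / 2) (Multiset.card S) (Multiset.card S + Multiset.card T)
      ((S + T).map fun b => X - C b).prod := by
  have hT0 : ∀ β ∈ T, β ≠ 0 := fun β hβ h0 => by
    have := hT β hβ
    rw [h0, norm_zero, mul_zero] at this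
    linarith
  set k := Multiset.card S
  set q := Multiset.card T
  set A := (S.map fun b => X - C b).prod
  set B := (T.map fun b => C (-b⁻¹) * X + 1).prod
  have hfactor : ((S + T).map fun b => X - C b).prod = C (T.map (-·)).prod * (A * B) := by
    rw [Multiset.map_add, Multiset.prod_add, Multiset.map_congr rfl fun β hβ =>
      X_sub_C_eq_C_mul β (hT0 β hβ), Multiset.prod_map_mul, map_multiset_prod, Multiset.map_map]
    simp only [A, B, Function.comp_def]
    ring
  have hA : IsMajorant ((X + C s) ^ k) A := IsMajorant.multiset_prod _ _ fun α hα => by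
    simpa [sub_eq_add_neg] using isMajorant_C_mul_X_add_C (a := 1) (b := -α) (s := 1)
      (by simp) (by simpa using hS α hα)
  have hB : IsMajorant ((C s * X + 1) ^ q) B := IsMajorant.multiset_prod _ _ fun β hβ => by
    simpa using isMajorant_C_mul_X_add_C (a := -β⁻¹) (b := 1) (s := s) (t := 1)
      (by simpa [norm_inv, inv_le_iff_one_le_mul₀ (norm_pos_iff.mpr (hT0 β hβ))]
        using hT β hβ)
      (by simp)
  have hAk : A.coeff k = 1 := by
    have hmonic : A.Monic := monic_multiset_prod_of_monic _ _ fun b _ => monic_X_sub_C b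
    rw [← hmonic.coeff_natDegree, natDegree_multiset_prod_X_sub_C_eq_card]
  have hak : ((X + C s) ^ k).coeff k = 1 := by simp [coeff_X_add_C_pow]
  have hB0 : B.coeff 0 = 1 := by simp [B, coeff_zero_eq_eval_zero, eval_multiset_prod]
  have hb0 : ((C s * X + 1) ^ q).coeff 0 = 1 := by simp [coeff_zero_eq_eval_zero]
  rw [hfactor]
  refine (coeffDominant_of_isMajorant_sub_X_pow (by norm_num) (Nat.le_add_right k q)
    (hA.mul_sub_X_pow hB hAk hak hB0 hb0) ?_).C_mul ?_
  · have := one_add_pow_lt_five_thirds hs (n := k + q) (by exact_mod_cast hST)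
    simp only [eval_sub, eval_mul, eval_pow, eval_add, eval_X, eval_C, eval_one, one_pow, mul_one]
    rw [add_comm s 1, ← pow_add]
    linarith
  · exact Multiset.prod_ne_zero fun h => by
      obtain ⟨β, hβ, h0⟩ := Multiset.mem_map.mp h
      exact hT0 β hβ (neg_eq_zero.mp h0)

lemma comp_C_add_C_mul_X_eq (F : ℂ[X]) (m : ℂ) {r : ℂ} (hr : r ≠ 0) :
    F.comp (C m + C r * X) = C (F.leadingCoeff * r ^ F.natDegree) *
      ((F.roots.map fun z => (z - m) / r).map fun b => X - C b).prod := by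
  have hfactor (z : ℂ) : (X - C z).comp (C m + C r * X) = C r * (X - C ((z - m) / r)) := by
    rw [sub_comp, X_comp, C_comp, mul_sub, ← C_mul, mul_div_cancel₀ _ hr, map_sub]
    ring
  conv_lhs =>
    rw [← C_leadingCoeff_mul_prod_multiset_X_sub_C (p := F) IsAlgClosed.card_roots_eq_natDegree]
  rw [mul_comp, C_comp, multiset_prod_comp, Multiset.map_map]
  simp only [Function.comp_def, hfactor]
  rw [Multiset.prod_map_mul, Multiset.map_const', Multiset.prod_replicate,
    IsAlgClosed.card_roots_eq_natDegree, Multiset.map_map, C_mul, C_pow]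
  simp only [Function.comp_def]
  ring

lemma exists_two_pow_eq_mul_of_ceil_logb (n N : ℕ)
    (hN : (N : ℤ) = ⌈Real.logb 2 (1 + Real.logb 2 n)⌉ + 5) :
    ∃ j : ℕ, 2 ^ N = 32 * j ∧ 2 * n ≤ 2 ^ j := by
  have hlog : 0 ≤ Real.logb 2 (n : ℝ) := by
    rcases n.eq_zero_or_pos with rfl | hn
    · simp
    · exact Real.logb_nonneg one_lt_two (by exact_mod_cast hn)
  have hceil : 0 ≤ ⌈Real.logb 2 (1 + Real.logb 2 n)⌉ :=
    Int.ceil_nonneg (Real.logb_nonneg one_lt_two (by linarith))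
  obtain ⟨t, ht⟩ := Int.eq_ofNat_of_zero_le hceil
  refine ⟨2 ^ t, by rw [show N = t + 5 by omega, pow_add]; ring, ?_⟩
  rcases n.eq_zero_or_pos with rfl | hn
  · simp
  have h1 : Real.logb 2 (1 + Real.logb 2 n) ≤ t := by
    exact_mod_cast ht ▸ Int.le_ceil (Real.logb 2 (1 + Real.logb 2 n))
  rw [Real.logb_le_iff_le_rpow one_lt_two (by linarith), Real.rpow_natCast] at h1
  have h2 : Real.logb 2 (2 * n) ≤ ((2 ^ t : ℕ) : ℝ) := by
    rw [Real.logb_mul two_ne_zero (by positivity), Real.logb_self_eq_one one_lt_two]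
    push_cast
    linarith
  rw [Real.logb_le_iff_le_rpow one_lt_two (by positivity), Real.rpow_natCast] at h2
  exact_mod_cast h2

theorem coeffDominant_map_pow_of_isolated (B : Multiset ℂ) (j : ℕ)
    (hj : 2 * Multiset.card B ≤ 2 ^ j)
    (hB : ∀ α ∈ B, ¬(2 * Real.sqrt 2 / 3 ≤ ‖α‖ ∧ ‖α‖ < 4 / 3)) :
    CoeffDominant (3 / 2) (Multiset.card (B.filter fun α => ‖α‖ < 2 * Real.sqrt 2 / 3))
      (Multiset.card B) ((B.map (· ^ (32 * j))).map fun b => X - C b).prod := by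
  set ρ := 2 * Real.sqrt 2 / 3
  have hρ : ρ ^ 2 = 8 / 9 := by
    rw [div_pow, mul_pow, Real.sq_sqrt zero_le_two]
    norm_num
  set s : ℝ := (1 / 2) ^ j
  have hsmall :
      ∀ β ∈ (B.filter fun α => ‖α‖ < ρ).map (· ^ (32 * j)), ‖β‖ ≤ s := by
    simp only [Multiset.forall_mem_map_iff, Multiset.mem_filter, norm_pow]
    intro α ⟨_, hα⟩
    calc ‖α‖ ^ (32 * j) ≤ ρ ^ (32 * j) := pow_le_pow_left₀ (norm_nonneg α) hα.le _
      _ = ((8 / 9) ^ 16) ^ j := by rw [show 32 * j = 2 * 16 * j by ring, pow_mul, pow_mul, hρ]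
      _ ≤ s := pow_le_pow_left₀ (by norm_num) (by norm_num) j
  have hlarge :
      ∀ β ∈ (B.filter fun α => ¬‖α‖ < ρ).map (· ^ (32 * j)), 1 ≤ s * ‖β‖ := by
    simp only [Multiset.forall_mem_map_iff, Multiset.mem_filter, norm_pow]
    intro α ⟨hαB, hα⟩
    have hα' : 4 / 3 ≤ ‖α‖ := by
      by_contra h
      exact hB α hαB ⟨not_lt.mp hα, not_le.mp h⟩
    calc (1 : ℝ) ≤ (1 / 2 * (4 / 3) ^ 32) ^ j := one_le_pow₀ (by norm_num)
      _ = s * (4 / 3) ^ (32 * j) := by rw [mul_pow, pow_mul]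
      _ ≤ s * ‖α‖ ^ (32 * j) := by gcongr
  have hcard : ((Multiset.card B : ℕ) : ℝ) * s ≤ 1 / 2 := by
    have : (2 * Multiset.card B : ℝ) ≤ 2 ^ j := by exact_mod_cast hj
    rw [show s = 1 / 2 ^ j from one_div_pow 2 j, ← div_eq_mul_one_div,
      div_le_iff₀ (by positivity)]
    linarith
  have hsplit : Multiset.card ((B.filter fun α => ‖α‖ < ρ).map (· ^ (32 * j))) +
      Multiset.card ((B.filter fun α => ¬‖α‖ < ρ).map (· ^ (32 * j))) =
        Multiset.card B := by
    rw [Multiset.card_map, Multiset.card_map, ← Multiset.card_add, Multiset.filter_add_not]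
  have := coeffDominant_prod_X_sub_C (by positivity) hsmall hlarge
    (by rw [← Nat.cast_add, hsplit]; exact hcard)
  rwa [hsplit, ← Multiset.map_add, Multiset.filter_add_not, Multiset.card_map] at this

theorem tkG_test_success_general (F : Polynomial ℂ) (n : ℕ) (hn : 2 ≤ n) (hdeg : F.natDegree = n)
    (m : ℂ) (r : ℝ) (hr : 0 < r) (N : ℕ)
    (hN : (N : ℤ) = ⌈Real.logb 2 (1 + Real.logb 2 n)⌉ + 5)
    (k : ℕ)
    (hin : rootsInDisk F m (2 * Real.sqrt 2 / 3 * r) = k)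
    (hann : ∀ z ∈ F.roots,
      ¬(2 * Real.sqrt 2 / 3 * r ≤ ‖z - m‖ ∧ ‖z - m‖ < 4 / 3 * r)) :
    (3 / 2 : ℝ) * ∑ i ∈ (Finset.range (n + 1)).erase k,
        ‖(graeffe^[N] (F.comp (Polynomial.C m + Polynomial.C (r : ℂ) * Polynomial.X))).coeff i‖ <
      ‖(graeffe^[N] (F.comp (Polynomial.C m + Polynomial.C (r : ℂ) * Polynomial.X))).coeff k‖ := by
  have hF : F ≠ 0 := by
    rintro rfl
    rw [natDegree_zero] at hdeg
    omega
  have hrC : (r : ℂ) ≠ 0 := Complex.ofReal_ne_zero.mpr hr.ne'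
  obtain ⟨j, hE, hj⟩ := exists_two_pow_eq_mul_of_ceil_logb n N hN
  rw [comp_C_add_C_mul_X_eq F m hrC, graeffe_iterate_C_mul_prod_X_sub_C, hE]
  set B := F.roots.map fun z => (z - m) / (r : ℂ)
  have hcardB : Multiset.card B = n := by
    rw [Multiset.card_map, IsAlgClosed.card_roots_eq_natDegree, hdeg]
  have hnorm (z : ℂ) : ‖(z - m) / (r : ℂ)‖ = ‖z - m‖ / r := by
    rw [norm_div, Complex.norm_real, Real.norm_of_nonneg hr.le]
  have hcardS : Multiset.card (B.filter fun α => ‖α‖ < 2 * Real.sqrt 2 / 3) = k := by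
    rw [← hin, rootsInDisk, Multiset.filter_map, Multiset.card_map]
    congr 1
    exact Multiset.filter_congr fun z _ => by
      simp only [Function.comp_apply, hnorm, div_lt_iff₀ hr]
  have hB : ∀ α ∈ B, ¬(2 * Real.sqrt 2 / 3 ≤ ‖α‖ ∧ ‖α‖ < 4 / 3) := by
    simpa only [B, Multiset.forall_mem_map_iff, hnorm, le_div_iff₀ hr, div_lt_iff₀ hr]
      using hann
  have hc : (F.leadingCoeff * (r : ℂ) ^ F.natDegree) ^ (32 * j) ≠ 0 :=
    pow_ne_zero _ (mul_ne_zero (leadingCoeff_ne_zero.mpr hF) (pow_ne_zero _ hrC))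
  have := (coeffDominant_map_pow_of_isolated B j (hcardB ▸ hj) hB).C_mul hc
  rwa [hcardS, hcardB] at this

/-- **Success of the `T_k^G`-test** (Lemma `softtest:success` (a)): if `D(m,r)` is
`(ρ₁, ρ₂)`-isolating for a set of `k` roots of `F`, with `ρ₁ = 2√2/3` and `ρ₂ = 4/3`,
then, with `N := ⌈log₂(1 + log₂ n)⌉ + 5` and `G := (F_Δ)^{[N]}` the `N`-th Graeffe
iterate of `F_Δ(X) := F(m + r·X)`, the test `T_k(0, 1, 3/2, G)` succeeds, i.e.
`|g_k| > (3/2)·∑_{i ≠ k} |g_i|`. -/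
theorem tkG_test_success (F : Polynomial ℂ) (n : ℕ) (hn : 2 ≤ n) (hdeg : F.natDegree = n)
    (m : ℂ) (r : ℝ) (hr : 0 < r) (N : ℕ)
    (hN : (N : ℤ) = ⌈Real.logb 2 (1 + Real.logb 2 n)⌉ + 5)
    (k : ℕ) (hk : k ≤ n)
    (hin : rootsInDisk F m (2 * Real.sqrt 2 / 3 * r) = k)
    (hann : ∀ z ∈ F.roots,
      ¬(2 * Real.sqrt 2 / 3 * r ≤ ‖z - m‖ ∧ ‖z - m‖ < 4 / 3 * r)) :
    (3 / 2 : ℝ) * ∑ i ∈ (Finset.range (n + 1)).erase k,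
        ‖(graeffe^[N] (F.comp (Polynomial.C m + Polynomial.C (r : ℂ) * Polynomial.X))).coeff i‖ <
      ‖(graeffe^[N] (F.comp (Polynomial.C m + Polynomial.C (r : ℂ) * Polynomial.X))).coeff k‖ :=
  tkG_test_success_general F n hn hdeg m r hr N hN k hin hann
end

section
/- Let F = a·∏_{i=1}^n (X − z_i) ∈ ℂ[X] with a ≠ 0 and n = deg F ≥ 2, where z_1,…,z_n are the roots listed with multiplicity. Let k be an integer with 0 ≤ k ≤ n, let K ∈ ℝ with K ≥ 1, and let c_1, c_2 ∈ ℝ satisfy c_2·n·ln((1 + 2K)/(2K)) ≥ c_1·n ≥ max(1,k)/ln(1 + 1/(8K)). Let m ∈ ℂ and r > 0, and assume |z_i − m| < r for 1 ≤ i ≤ k and |z_i − m| ≥ 4·c_2·max(1,k)·n³·r for k < i ≤ n. Then F^{(k)}(m) ≠ 0 and ∑_{i=k+1}^{n} |F^{(i)}(m)|·(c_1·n·r)^{i−k}·k! / (|F^{(k)}(m)|·i!) < 1/(2K). -/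
/-!
Put `w j = m - z j`. Then `F^{(i)}(m) / i! = a · p_i`, where `p_i` is the `i`-th coefficient of
`p = ∏ (X + w j)`, and `|p_i| ≤ q_i` for the coefficients `q_i` of `q = ∏ (X + |w j|)`. The
coefficient `p_k` contains the product `P` of the `n - k` outer distances as one of its terms,
so `|p_k| ≥ 2P - q_k`. With `ρ = c₁nr` and `σ = 4Kρ`, isolation gives
`q(σ) = ∏ (|w j| + σ) ≤ (128/93) σ^k P`, while `q(σ) ≥ σ^k (q_k + (σ/ρ) ∑_{i>k} q_i ρ^{i-k})`.
As `128/93 < 2`, this yields `(σ/ρ) ∑_{i>k} |p_i| ρ^{i-k} < |p_k|`: the tail ratio is below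
`ρ/σ = 1/(4K)`.
-/

open Polynomial Finset

lemma log_one_add_le_self {y : ℝ} (hy : -1 < y) : Real.log (1 + y) ≤ y :=
  (Real.log_le_sub_one_of_pos (by linarith)).trans_eq (add_sub_cancel_left 1 y)

lemma div_le_of_div_log_one_add_le {a b y : ℝ} (ha : 0 ≤ a) (hy : 0 < y)
    (h : a / Real.log (1 + y) ≤ b) : a / y ≤ b :=
  (div_le_div_of_nonneg_left ha (Real.log_pos (by linarith))
    (log_one_add_le_self (by linarith))).trans h

lemma le_mul_of_le_mul_log_one_add {a b y : ℝ} (ha : 0 < a) (hy : 0 < y)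
    (h : a ≤ b * Real.log (1 + y)) : a ≤ b * y := by
  have hb : 0 < b := pos_of_mul_pos_left (ha.trans_le h) (Real.log_pos (by linarith)).le
  exact h.trans (mul_le_mul_of_nonneg_left (log_one_add_le_self (by linarith)) hb.le)

lemma one_add_pow_le_one_div_one_sub {x c : ℝ} (hx : 0 ≤ x) {m : ℕ} (hc : m * x ≤ c)
    (hc1 : c < 1) : (1 + x) ^ m ≤ 1 / (1 - c) :=
  calc (1 + x) ^ m ≤ Real.exp x ^ m := by
        gcongr; linarith [Real.add_one_le_exp x]
    _ = Real.exp (m * x) := (Real.exp_nat_mul x m).symm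
    _ ≤ 1 / (1 - m * x) := Real.exp_bound_div_one_sub_of_interval (by positivity) (by linarith)
    _ ≤ 1 / (1 - c) := one_div_le_one_div_of_le (by linarith) (by linarith)

lemma div_mul_pow_le_pow {ρ σ : ℝ} (hρ : 0 < ρ) (hρσ : ρ ≤ σ) {u : ℕ} (hu : u ≠ 0) :
    σ / ρ * ρ ^ u ≤ σ ^ u := by
  obtain ⟨v, rfl⟩ := Nat.exists_eq_succ_of_ne_zero hu
  have hσ : 0 ≤ σ := hρ.le.trans hρσ
  calc σ / ρ * ρ ^ (v + 1) = σ * ρ ^ v := by field_simp; ring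
    _ ≤ σ * σ ^ v := by gcongr
    _ = σ ^ (v + 1) := (pow_succ' σ v).symm

lemma prod_range_add_le {A : ℕ → ℝ} {k n : ℕ} (hkn : k ≤ n) {r R σ : ℝ} (hR : 0 < R)
    (hσ : 0 ≤ σ) (hA : ∀ j, 0 ≤ A j) (hin : ∀ j < k, A j ≤ r)
    (hout : ∀ j, k ≤ j → j < n → R ≤ A j) :
    ∏ j ∈ range n, (A j + σ) ≤ (r + σ) ^ k * ((1 + σ / R) ^ (n - k) * ∏ j ∈ Ico k n, A j) := by
  have hnonneg : ∀ j, 0 ≤ A j + σ := fun j => add_nonneg (hA j) hσ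
  have hinner : ∏ j ∈ Ico 0 k, (A j + σ) ≤ (r + σ) ^ k :=
    calc ∏ j ∈ Ico 0 k, (A j + σ) ≤ ∏ j ∈ Ico 0 k, (r + σ) :=
          prod_le_prod (fun j _ => hnonneg j) fun j hj => by
            linarith [hin j (mem_Ico.1 hj).2]
      _ = (r + σ) ^ k := by simp
  have houter : ∏ j ∈ Ico k n, (A j + σ) ≤ (1 + σ / R) ^ (n - k) * ∏ j ∈ Ico k n, A j :=
    calc ∏ j ∈ Ico k n, (A j + σ) ≤ ∏ j ∈ Ico k n, (1 + σ / R) * A j :=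
          prod_le_prod (fun j _ => hnonneg j) fun j hj => by
            have hRA := hout j (mem_Ico.1 hj).1 (mem_Ico.1 hj).2
            have : σ ≤ σ / R * A j := by
              rw [div_mul_eq_mul_div, le_div_iff₀ hR]; exact mul_le_mul_of_nonneg_left hRA hσ
            linarith
      _ = (1 + σ / R) ^ (n - k) * ∏ j ∈ Ico k n, A j := by
          rw [prod_mul_distrib, prod_const, Nat.card_Ico]
  rw [range_eq_Ico, ← prod_Ico_consecutive _ (Nat.zero_le k) hkn]
  exact mul_le_mul hinner houter (prod_nonneg fun j _ => hnonneg j)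
    ((prod_nonneg fun j _ => hnonneg j).trans hinner)

lemma prod_range_add_le_inv_mul {A : ℕ → ℝ} {k n : ℕ} (hkn : k ≤ n) {r R σ α β : ℝ}
    (hr : 0 ≤ r) (hR : 0 < R) (hσ : 0 < σ) (hA : ∀ j, 0 ≤ A j) (hin : ∀ j < k, A j ≤ r)
    (hout : ∀ j, k ≤ j → j < n → R ≤ A j) (hβ : k * r ≤ β * σ) (hβ1 : β < 1)
    (hα : ((n - k : ℕ) : ℝ) * σ ≤ α * R) (hα1 : α < 1) :
    ∏ j ∈ range n, (A j + σ) ≤ ((1 - β) * (1 - α))⁻¹ * σ ^ k * ∏ j ∈ Ico k n, A j := by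
  have hinner : (1 + r / σ) ^ k ≤ 1 / (1 - β) :=
    one_add_pow_le_one_div_one_sub (by positivity)
      (by rwa [← mul_div_assoc, div_le_iff₀ hσ]) hβ1
  have houter : (1 + σ / R) ^ (n - k) ≤ 1 / (1 - α) :=
    one_add_pow_le_one_div_one_sub (by positivity)
      (by rwa [← mul_div_assoc, div_le_iff₀ hR]) hα1
  have hP : 0 ≤ ∏ j ∈ Ico k n, A j := prod_nonneg fun j _ => hA j
  calc ∏ j ∈ range n, (A j + σ)
      ≤ (r + σ) ^ k * ((1 + σ / R) ^ (n - k) * ∏ j ∈ Ico k n, A j) :=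
        prod_range_add_le hkn hR hσ.le hA hin hout
    _ = σ ^ k * (1 + r / σ) ^ k * ((1 + σ / R) ^ (n - k) * ∏ j ∈ Ico k n, A j) := by
        rw [← mul_pow, mul_add, mul_one, mul_div_cancel₀ _ hσ.ne', add_comm]
    _ ≤ σ ^ k * (1 / (1 - β)) * (1 / (1 - α) * ∏ j ∈ Ico k n, A j) := by
        gcongr
    _ = ((1 - β) * (1 - α))⁻¹ * σ ^ k * ∏ j ∈ Ico k n, A j := by
        rw [mul_inv]; ring

lemma coeff_prod_X_add_C_nonneg {ι : Type*} (s : Finset ι) {A : ι → ℝ} (hA : ∀ j, 0 ≤ A j)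
    (i : ℕ) : 0 ≤ (∏ j ∈ s, (X + C (A j))).coeff i := by
  refine prod_induction _ (fun p : ℝ[X] => ∀ i, 0 ≤ p.coeff i) (fun p q hp hq i => ?_)
    (fun i => ?_) (fun j _ i => ?_) i
  · rw [coeff_mul]; exact sum_nonneg fun x _ => mul_nonneg (hp _) (hq _)
  · rw [coeff_one]; split_ifs <;> norm_num
  · rw [coeff_add, coeff_X, coeff_C]; split_ifs <;> linarith [hA j]

lemma sum_coeff_mul_pow_le_eval {p : ℝ[X]} (hp : ∀ i, 0 ≤ p.coeff i) {x : ℝ} (hx : 0 ≤ x)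
    (S : Finset ℕ) : ∑ i ∈ S, p.coeff i * x ^ i ≤ p.eval x := by
  have hnonneg : ∀ i, 0 ≤ p.coeff i * x ^ i := fun i => mul_nonneg (hp i) (pow_nonneg hx i)
  calc ∑ i ∈ S, p.coeff i * x ^ i ≤ ∑ i ∈ S ∪ range (p.natDegree + 1), p.coeff i * x ^ i :=
        sum_le_sum_of_subset_of_nonneg subset_union_left fun i _ _ => hnonneg i
    _ = ∑ i ∈ range (p.natDegree + 1), p.coeff i * x ^ i := by
        refine (sum_subset subset_union_right fun i _ hi => ?_).symm
        rw [coeff_eq_zero_of_natDegree_lt (by simpa using hi), zero_mul]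
    _ = p.eval x := (eval_eq_sum_range x).symm

section NormedField

variable {ι 𝕜 : Type*} [NormedField 𝕜]

lemma norm_coeff_prod_X_add_C_le (s : Finset ι) (w : ι → 𝕜) {i : ℕ} (hi : i ≤ #s) :
    ‖(∏ j ∈ s, (X + C (w j))).coeff i‖ ≤ (∏ j ∈ s, (X + C ‖w j‖)).coeff i := by
  rw [prod_X_add_C_coeff _ _ hi, prod_X_add_C_coeff _ _ hi]
  exact (norm_sum_le _ _).trans (sum_le_sum fun t _ => (norm_prod _ _).le)

lemma two_mul_prod_norm_sub_coeff_le (w : ι → 𝕜) {s t : Finset ι} (hts : t ⊆ s) :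
    2 * ∏ j ∈ t, ‖w j‖ - (∏ j ∈ s, (X + C ‖w j‖)).coeff (#s - #t) ≤
      ‖(∏ j ∈ s, (X + C (w j))).coeff (#s - #t)‖ := by
  classical
  have hmem : t ∈ powersetCard #t s := mem_powersetCard.2 ⟨hts, rfl⟩
  rw [prod_X_add_C_coeff _ _ (Nat.sub_le _ _), prod_X_add_C_coeff _ _ (Nat.sub_le _ _),
    Nat.sub_sub_self (card_le_card hts), ← add_sum_erase _ _ hmem, ← add_sum_erase _ _ hmem]
  calc 2 * ∏ j ∈ t, ‖w j‖ - (∏ j ∈ t, ‖w j‖ + ∑ u ∈ (powersetCard #t s).erase t, ∏ j ∈ u, ‖w j‖)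
      = ‖∏ j ∈ t, w j‖ - ∑ u ∈ (powersetCard #t s).erase t, ‖∏ j ∈ u, w j‖ := by
        simp only [norm_prod]; ring
    _ ≤ ‖∏ j ∈ t, w j‖ - ‖∑ u ∈ (powersetCard #t s).erase t, ∏ j ∈ u, w j‖ := by
        gcongr; exact norm_sum_le _ _
    _ ≤ _ := norm_sub_le_norm_add _ _

lemma coeff_ne_zero_and_sum_norm_coeff_div_lt (w : ι → 𝕜) {s t : Finset ι} (hts : t ⊆ s)
    {k : ℕ} (hk : #s - #t = k) {ρ σ B : ℝ} (hρ : 0 < ρ) (hρσ : ρ ≤ σ) (hB : B < 2)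
    (ht : ∀ j ∈ t, w j ≠ 0)
    (hprod : ∏ j ∈ s, (‖w j‖ + σ) ≤ B * σ ^ k * ∏ j ∈ t, ‖w j‖) :
    (∏ j ∈ s, (X + C (w j))).coeff k ≠ 0 ∧
      ∑ i ∈ Icc (k + 1) #s, ‖(∏ j ∈ s, (X + C (w j))).coeff i‖ * ρ ^ (i - k) /
        ‖(∏ j ∈ s, (X + C (w j))).coeff k‖ < ρ / σ := by
  set p := ∏ j ∈ s, (X + C (w j))
  set q := ∏ j ∈ s, (X + C ‖w j‖)
  set P := ∏ j ∈ t, ‖w j‖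
  set T := ∑ i ∈ Icc (k + 1) #s, ‖p.coeff i‖ * ρ ^ (i - k)
  have hσ : 0 < σ := hρ.trans_le hρσ
  have hP : 0 < P := prod_pos fun j hj => norm_pos_iff.2 (ht j hj)
  have hlow : 2 * P - q.coeff k ≤ ‖p.coeff k‖ := hk ▸ two_mul_prod_norm_sub_coeff_le w hts
  have htail : σ ^ k * (σ / ρ * T) ≤ ∑ i ∈ Icc (k + 1) #s, q.coeff i * σ ^ i := by
    rw [mul_sum, mul_sum]
    refine sum_le_sum fun i hi => ?_
    obtain ⟨hki, his⟩ := mem_Icc.1 hi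
    calc σ ^ k * (σ / ρ * (‖p.coeff i‖ * ρ ^ (i - k)))
        = ‖p.coeff i‖ * (σ ^ k * (σ / ρ * ρ ^ (i - k))) := by ring
      _ ≤ q.coeff i * (σ ^ k * σ ^ (i - k)) :=
          mul_le_mul (norm_coeff_prod_X_add_C_le s w his)
            (mul_le_mul_of_nonneg_left (div_mul_pow_le_pow hρ hρσ (Nat.sub_ne_zero_of_lt hki))
              (by positivity))
            (by positivity) (coeff_prod_X_add_C_nonneg s (fun j => norm_nonneg _) i)
      _ = q.coeff i * σ ^ i := by rw [← pow_add, Nat.add_sub_cancel' (by omega)]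
  have hsum : σ ^ k * (q.coeff k + σ / ρ * T) ≤ σ ^ k * (B * P) :=
    calc σ ^ k * (q.coeff k + σ / ρ * T)
        ≤ q.coeff k * σ ^ k + ∑ i ∈ Icc (k + 1) #s, q.coeff i * σ ^ i := by linarith
      _ = ∑ i ∈ insert k (Icc (k + 1) #s), q.coeff i * σ ^ i := by
          rw [sum_insert (by simp)]
      _ ≤ q.eval σ :=
          sum_coeff_mul_pow_le_eval (coeff_prod_X_add_C_nonneg s fun j => norm_nonneg _) hσ.le _
      _ = ∏ j ∈ s, (‖w j‖ + σ) := by simp only [q, eval_prod, eval_add, eval_X, eval_C, add_comm]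
      _ ≤ σ ^ k * (B * P) := by linarith
  have hkey : σ / ρ * T < ‖p.coeff k‖ := by
    have := le_of_mul_le_mul_left hsum (pow_pos hσ k)
    linarith [mul_pos (sub_pos.2 hB) hP]
  have hT : 0 ≤ T := sum_nonneg fun i _ => by positivity
  have hpk : 0 < ‖p.coeff k‖ := (by positivity : 0 ≤ σ / ρ * T).trans_lt hkey
  refine ⟨norm_pos_iff.1 hpk, ?_⟩
  rw [← sum_div, div_lt_iff₀ hpk]
  calc T = ρ / σ * (σ / ρ * T) := by field_simp
    _ < ρ / σ * ‖p.coeff k‖ := by gcongr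

end NormedField

lemma iterate_derivative_eval_C_mul_prod_X_sub_C {ι R : Type*} [CommRing R] (a m : R)
    (s : Finset ι) (z : ι → R) (i : ℕ) :
    (derivative^[i] (C a * ∏ j ∈ s, (X - C (z j)))).eval m =
      (i.factorial : R) * (a * (∏ j ∈ s, (X + C (m - z j))).coeff i) := by
  have htaylor : taylor m (C a * ∏ j ∈ s, (X - C (z j))) = C a * ∏ j ∈ s, (X + C (m - z j)) := by
    change taylorAlgHom m _ = _
    simp only [map_mul, map_prod, map_sub, taylorAlgHom_apply, taylor_C, taylor_X]
    congr 1
    exact prod_congr rfl fun j _ => by ring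
  rw [← factorial_smul_hasseDeriv, LinearMap.smul_apply, eval_smul, ← taylor_coeff, htaylor,
    coeff_C_mul, nsmul_eq_mul]

lemma isolation_parameters {n k : ℕ} (hn : 2 ≤ n) {K c₁ c₂ r : ℝ} (hK : 1 ≤ K) (hr : 0 < r)
    (hc₂ : c₁ * n ≤ c₂ * n * Real.log ((1 + 2 * K) / (2 * K)))
    (hc₁ : max 1 (k : ℝ) / Real.log (1 + 1 / (8 * K)) ≤ c₁ * n) :
    0 < c₁ * n * r ∧ 0 < 4 * c₂ * max 1 (k : ℝ) * n ^ 3 * r ∧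
      k * r ≤ 1 / 32 * (4 * K * (c₁ * n * r)) ∧
      ((n - k : ℕ) : ℝ) * (4 * K * (c₁ * n * r)) ≤
        1 / 4 * (4 * c₂ * max 1 (k : ℝ) * n ^ 3 * r) := by
  set M := max 1 (k : ℝ)
  have hM1 : 1 ≤ M := le_max_left _ _
  have hkM : (k : ℝ) ≤ M := le_max_right _ _
  have hn2 : (2 : ℝ) ≤ n := by exact_mod_cast hn
  have h₁ : 8 * K * M ≤ c₁ * n := by
    have := div_le_of_div_log_one_add_le (by positivity) (by positivity) hc₁
    rwa [div_div_eq_mul_div, div_one, mul_comm] at this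
  have hc₁n : 0 < c₁ * n := by nlinarith
  have hc₁pos : 0 < c₁ := pos_of_mul_pos_left hc₁n (by positivity)
  have hc₂c₁ : 2 * K * c₁ ≤ c₂ := by
    have h₂ : c₁ * n ≤ c₂ * n * (1 / (2 * K)) := by
      refine le_mul_of_le_mul_log_one_add hc₁n (by positivity) ?_
      rwa [one_add_div (by positivity), add_comm]
    rw [mul_one_div, le_div_iff₀ (by positivity)] at h₂
    nlinarith
  have hc₂pos : 0 < c₂ := lt_of_lt_of_le (by positivity) hc₂c₁
  refine ⟨by positivity, by positivity, ?_, ?_⟩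
  · have : 8 * k ≤ K * (c₁ * n) := by
      nlinarith [mul_nonneg (sub_nonneg.2 hK) (sub_nonneg.2 hM1),
        mul_nonneg (sub_nonneg.2 hK) hc₁n.le]
    nlinarith
  · have hnk : ((n - k : ℕ) : ℝ) ≤ n := by exact_mod_cast Nat.sub_le n k
    have hMn : 2 ≤ M * n := by nlinarith
    calc ((n - k : ℕ) : ℝ) * (4 * K * (c₁ * n * r)) ≤ n * (4 * K * (c₁ * n * r)) := by
          gcongr
      _ = 2 * (2 * K * c₁) * (n ^ 2 * r) := by ring
      _ ≤ M * n * c₂ * (n ^ 2 * r) := by gcongr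
      _ = 1 / 4 * (4 * c₂ * M * n ^ 3 * r) := by ring

/-- **Tail estimate for the Taylor coefficients at `m`** (second assertion of the first
appendix lemma): if `D(m,r)` is `(1, 4c₂·max(1,k)·n³)`-isolating for the roots
`z_1, …, z_k` of `F = a·∏ (X − z_i)`, then `F^{(k)}(m) ≠ 0` and
`∑_{i=k+1}^{n} |F^{(i)}(m)|·(c₁nr)^{i−k}·k! / (|F^{(k)}(m)|·i!) < 1/(2K)`. -/
theorem taylor_tail_small (n : ℕ) (hn : 2 ≤ n) (a : ℂ) (ha : a ≠ 0) (z : ℕ → ℂ)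
    (F : Polynomial ℂ)
    (hF : F = Polynomial.C a * ∏ i ∈ Finset.range n, (Polynomial.X - Polynomial.C (z i)))
    (k : ℕ) (hk : k ≤ n) (K : ℝ) (hK : 1 ≤ K) (c₁ c₂ : ℝ)
    (hc₂ : c₁ * n ≤ c₂ * n * Real.log ((1 + 2 * K) / (2 * K)))
    (hc₁ : max 1 (k : ℝ) / Real.log (1 + 1 / (8 * K)) ≤ c₁ * n)
    (m : ℂ) (r : ℝ) (hr : 0 < r)
    (hin : ∀ i, i < k → ‖z i - m‖ < r)
    (hout : ∀ i, k ≤ i → i < n → 4 * c₂ * max 1 (k : ℝ) * n ^ 3 * r ≤ ‖z i - m‖) :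
    (Polynomial.derivative^[k] F).eval m ≠ 0 ∧
    ∑ i ∈ Finset.Icc (k + 1) n,
        ‖(Polynomial.derivative^[i] F).eval m‖ * (c₁ * n * r) ^ (i - k) *
          (Nat.factorial k) /
          (‖(Polynomial.derivative^[k] F).eval m‖ * (Nat.factorial i)) <
      1 / (2 * K) := by
  set w : ℕ → ℂ := fun j => m - z j
  set p := ∏ j ∈ range n, (X + C (w j))
  set ρ := c₁ * n * r
  have hderiv (i : ℕ) : (derivative^[i] F).eval m = i.factorial * (a * p.coeff i) :=
    hF ▸ iterate_derivative_eval_C_mul_prod_X_sub_C a m _ z i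
  have hw (j : ℕ) : ‖w j‖ = ‖z j - m‖ := norm_sub_rev _ _
  obtain ⟨hρ, hR, hβ, hα⟩ := isolation_parameters (k := k) hn hK hr hc₂ hc₁
  have hprod : ∏ j ∈ range n, (‖w j‖ + 4 * K * ρ) ≤
      ((1 - 1 / 32) * (1 - 1 / 4))⁻¹ * (4 * K * ρ) ^ k * ∏ j ∈ Ico k n, ‖w j‖ :=
    prod_range_add_le_inv_mul hk hr.le hR (by positivity) (fun j => norm_nonneg _)
      (fun j hj => hw j ▸ (hin j hj).le) (fun j hkj hjn => hw j ▸ hout j hkj hjn)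
      hβ (by norm_num) hα (by norm_num)
  obtain ⟨hpk, hlt⟩ := coeff_ne_zero_and_sum_norm_coeff_div_lt w (k := k)
    (fun j hj => mem_range.2 (mem_Ico.1 hj).2) (by simp [Nat.sub_sub_self hk]) hρ
    (σ := 4 * K * ρ) (le_mul_of_one_le_left hρ.le (by linarith)) (B := ((1 - 1 / 32) * (1 - 1 / 4))⁻¹) (by norm_num)
    (fun j hj => norm_pos_iff.1 (hR.trans_le (hw j ▸ hout j (mem_Ico.1 hj).1 (mem_Ico.1 hj).2)))
    hprod
  refine ⟨by simpa [hderiv, ha, Nat.factorial_ne_zero] using hpk, ?_⟩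
  calc _ = ∑ i ∈ Icc (k + 1) n, ‖p.coeff i‖ * ρ ^ (i - k) / ‖p.coeff k‖ :=
        sum_congr rfl fun i _ => by
          simp only [hderiv, norm_mul, Complex.norm_natCast]
          field_simp
    _ < ρ / (4 * K * ρ) := by simpa using hlt
    _ ≤ 1 / (2 * K) := by
        rw [div_mul_cancel_right₀ hρ.ne', one_div]
        gcongr
        linarith
end
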